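/- arXiv:1705.06162 — 3 statements merged into one kernel-verified Lean document; each statement's English description precedes it below -/
import Mathlib

section
/- Let p, q, a, ν be real numbers with p ≠ 0, and suppose that 4 q a² + 1 = 0 and A = −12 ν q a / p. Then the function U(ξ) = A · sech²(ξ) satisfies −ν U(ξ) + (p a / 2) U(ξ)² − ν q a² U″(ξ) = 0 for all ξ ∈ ℝ. -/
/-! Writing `S = sech²`, one has `S'' = 4 S - 6 S²`. Hence for `U = A S` the equation becomes
`-ν A (1 + 4 q a²) S + (p A a / 2 + 6 ν q a²) A S² = 0`; the first coefficient vanishes by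
`4 q a² + 1 = 0` and the second by the choice `p A = -12 ν q a`. -/

open Real

lemma hasDerivAt_sech_sq (x : ℝ) :
    HasDerivAt (fun x => (1 / cosh x) ^ 2) (-2 * sinh x / cosh x ^ 3) x := by
  have hcosh : cosh x ≠ 0 := (cosh_pos x).ne'
  simp only [one_div]
  refine (((hasDerivAt_cosh x).inv hcosh).fun_pow 2).congr_deriv ?_
  simp
  field_simp

lemma deriv_sech_sq : deriv (fun x => (1 / cosh x) ^ 2) = fun x => -2 * sinh x / cosh x ^ 3 :=
  funext fun x => (hasDerivAt_sech_sq x).deriv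

lemma deriv_deriv_sech_sq (x : ℝ) :
    deriv (deriv fun x => (1 / cosh x) ^ 2) x =
      4 * (1 / cosh x) ^ 2 - 6 * ((1 / cosh x) ^ 2) ^ 2 := by
  have hcosh : cosh x ≠ 0 := (cosh_pos x).ne'
  have hnum : HasDerivAt (fun x => -2 * sinh x) (-2 * cosh x) x :=
    (hasDerivAt_sinh x).const_mul (-2)
  have hden : HasDerivAt (fun x => cosh x ^ 3) (3 * cosh x ^ 2 * sinh x) x :=
    ((hasDerivAt_cosh x).fun_pow 3).congr_deriv (by norm_num)
  rw [deriv_sech_sq, (hnum.fun_div hden (pow_ne_zero 3 hcosh)).deriv]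
  field_simp
  linear_combination -6 * cosh_sq_sub_sinh_sq x

/-- If `4 q a² + 1 = 0` and `A = -12 ν q a / p` (with `p ≠ 0`), then
`U(ξ) = A sech²(ξ)` solves the once-integrated EW traveling wave equation
`-ν U + (p a / 2) U² - ν q a² U'' = 0` for all `ξ`. -/
theorem ew_sech_solution
    (p q a ν A : ℝ) (hp : p ≠ 0)
    (h1 : 4 * q * a ^ 2 + 1 = 0)
    (hA : A = -12 * ν * q * a / p) :
    ∀ ξ : ℝ,
      -ν * (A * (1 / Real.cosh ξ) ^ 2)
      + p * a / 2 * (A * (1 / Real.cosh ξ) ^ 2) ^ 2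
      - ν * q * a ^ 2 * deriv (deriv (fun ξ : ℝ => A * (1 / Real.cosh ξ) ^ 2)) ξ = 0 := by
  intro ξ
  have hpA : p * A = -12 * ν * q * a := by
    rw [hA]
    field_simp
  simp only [deriv_const_mul_field', deriv_deriv_sech_sq]
  linear_combination (-ν * A * (1 / cosh ξ) ^ 2) * h1 + (a / 2 * A * ((1 / cosh ξ) ^ 2) ^ 2) * hpA
end

section
/- Let p, q, a, ν be real numbers with p ≠ 0, and suppose that 4 q a² + 1 = 0 and A = 12 ν q a / p. Then the function U(ξ) = A · csch²(ξ) satisfies −ν U(ξ) + (p a / 2) U(ξ)² − ν q a² U″(ξ) = 0 for all ξ ≠ 0. -/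
/-!
Writing `w = csch² ξ`, the identity `cosh² = 1 + sinh²` turns the second derivative of `w` into
the polynomial `w'' = 4 w + 6 w²`. For `U = A w` the equation therefore becomes
`(-ν - 4 ν q a²) A w + (p a A / 2 - 6 ν q a²) A w² = 0`, and both coefficients vanish because
`4 q a² = -1` and `p A = 12 ν q a`.
-/

open Real Topology

namespace Real

theorem hasDerivAt_csch_sq {x : ℝ} (hx : x ≠ 0) :
    HasDerivAt (fun y => (1 / sinh y) ^ 2) (-2 * cosh x / sinh x ^ 3) x := by
  have hs : sinh x ≠ 0 := sinh_ne_zero.mpr hx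
  simp only [one_div]
  refine (((hasDerivAt_sinh x).fun_inv hs).fun_pow 2).congr_deriv ?_
  norm_num
  field_simp

theorem deriv_deriv_csch_sq {x : ℝ} (hx : x ≠ 0) :
    deriv (deriv fun y => (1 / sinh y) ^ 2) x =
      4 * (1 / sinh x) ^ 2 + 6 * ((1 / sinh x) ^ 2) ^ 2 := by
  have hs : sinh x ≠ 0 := sinh_ne_zero.mpr hx
  have hderiv :
      deriv (fun y => (1 / sinh y) ^ 2) =ᶠ[𝓝 x] fun y => -2 * cosh y / sinh y ^ 3 := by
    filter_upwards [isOpen_ne.mem_nhds hx] with y hy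
    exact (hasDerivAt_csch_sq hy).deriv
  have hnum : HasDerivAt (fun y => -2 * cosh y) (-2 * sinh x) x :=
    (hasDerivAt_cosh x).const_mul (-2)
  have hden : HasDerivAt (fun y => sinh y ^ 3) (3 * sinh x ^ 2 * cosh x) x := by
    simpa using (hasDerivAt_sinh x).fun_pow 3
  rw [hderiv.deriv_eq, (hnum.fun_div hden (pow_ne_zero 3 hs)).deriv]
  field_simp
  linear_combination 6 * cosh_sq' x

end Real

/-- If `4 q a² + 1 = 0` and `A = 12 ν q a / p` (with `p ≠ 0`), then
`U(ξ) = A csch²(ξ)` solves the once-integrated EW traveling wave equation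
`-ν U + (p a / 2) U² - ν q a² U'' = 0` for all `ξ ≠ 0`. -/
theorem ew_csch_solution
    (p q a ν A : ℝ) (hp : p ≠ 0)
    (h1 : 4 * q * a ^ 2 + 1 = 0)
    (hA : A = 12 * ν * q * a / p) :
    ∀ ξ : ℝ, ξ ≠ 0 →
      -ν * (A * (1 / Real.sinh ξ) ^ 2)
      + p * a / 2 * (A * (1 / Real.sinh ξ) ^ 2) ^ 2
      - ν * q * a ^ 2 * deriv (deriv (fun ξ : ℝ => A * (1 / Real.sinh ξ) ^ 2)) ξ = 0 := by
  intro ξ hξ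
  have hpA : p * A = 12 * ν * q * a := by
    rw [hA]
    field_simp
  simp only [deriv_const_mul_field']
  rw [deriv_deriv_csch_sq hξ]
  set w := (1 / sinh ξ) ^ 2
  linear_combination a / 2 * A * w ^ 2 * hpA - ν * A * w * h1
end

section
/- Let α ∈ (0,1], let p, q, ν be real numbers with p ≠ 0, ν ≠ 0, q < 0, and let ε ∈ {1, −1}. Set a = ε √(−1/(4q)) and A = 12 ν q a / p. Then the function u(x,t) = A · csch²(a x − (ν/α) t^α) satisfies the conformable time fractional EW equation t^{1−α} ∂u/∂t + p u ∂u/∂x + q · t^{1−α} ∂/∂t(∂²u/∂x²) = 0 at every point (x,t) with t > 0 and a x − (ν/α) t^α ≠ 0. -/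
/-!
Along the wave variable `ξ = a x - (ν/α) t^α` the conformable time derivative acts as `-ν d/dξ`
and `∂/∂x` as `a d/dξ`, so a wave `u = U(ξ)` solves the EW equation iff
`-ν U' + p a U U' - q ν a² U''' = 0`. For `U = A csch² ξ` one has `U'' = 4U + 6U²/A`, hence
`U''' = U' (4 + 12 csch² ξ)`, and the left side becomes
`U' (-ν (1 + 4 q a²) + a (p A - 12 ν q a) csch² ξ)`; both brackets vanish by the choice of `a`, `A`.
-/

open Real Filter Topology

section TravelingWave

variable {U U₁ U₂ U₃ : ℝ → ℝ} {s : Set ℝ} {a C x t α ν u : ℝ}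

theorem hasDerivAt_comp_affine (h : HasDerivAt U u (a * x - C)) :
    HasDerivAt (fun y => U (a * y - C)) (u * a) x := by
  have hlin : HasDerivAt (fun y : ℝ => a * y - C) a x := by
    simpa using ((hasDerivAt_id x).const_mul a).sub_const C
  exact h.comp x hlin

theorem hasDerivAt_wave_time (hα : α ≠ 0) (ht : 0 < t) :
    HasDerivAt (fun τ : ℝ => a * x - ν / α * τ ^ α) (-ν * t ^ (α - 1)) t := by
  have h := ((hasDerivAt_rpow_const (p := α) (Or.inl ht.ne')).const_mul (ν / α)).const_sub (a * x)
  refine h.congr_deriv ?_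
  field_simp

theorem rpow_one_sub_mul_deriv_wave_time (hα : α ≠ 0) (ht : 0 < t)
    (h : HasDerivAt U u (a * x - ν / α * t ^ α)) :
    t ^ (1 - α) * deriv (fun τ => U (a * x - ν / α * τ ^ α)) t = -ν * u := by
  have hpow : t ^ (1 - α) * t ^ (α - 1) = 1 := by
    rw [← rpow_add ht]; norm_num
  have hderiv : deriv (fun τ => U (a * x - ν / α * τ ^ α)) t = u * (-ν * t ^ (α - 1)) :=
    (h.comp t (hasDerivAt_wave_time hα ht)).deriv
  rw [hderiv]
  linear_combination (-ν * u) * hpow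

theorem deriv_deriv_comp_affine (hs : IsOpen s) (hU : ∀ ξ ∈ s, HasDerivAt U (U₁ ξ) ξ)
    (hU₁ : ∀ ξ ∈ s, HasDerivAt U₁ (U₂ ξ) ξ) (hx : a * x - C ∈ s) :
    deriv (deriv fun y => U (a * y - C)) x = U₂ (a * x - C) * a ^ 2 := by
  have hnhds : ∀ᶠ y in 𝓝 x, a * y - C ∈ s :=
    (continuous_const.mul continuous_id |>.sub continuous_const).continuousAt.preimage_mem_nhds
      (hs.mem_nhds hx)
  have hderiv : deriv (fun y => U (a * y - C)) =ᶠ[𝓝 x] fun y => U₁ (a * y - C) * a :=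
    hnhds.mono fun y hy => (hasDerivAt_comp_affine (hU _ hy)).deriv
  rw [hderiv.deriv_eq, ((hasDerivAt_comp_affine (hU₁ _ hx)).mul_const a).deriv]
  ring

theorem ew_operator_wave_eq (p q : ℝ) (hs : IsOpen s) (hU : ∀ ξ ∈ s, HasDerivAt U (U₁ ξ) ξ)
    (hU₁ : ∀ ξ ∈ s, HasDerivAt U₁ (U₂ ξ) ξ) (hU₂ : ∀ ξ ∈ s, HasDerivAt U₂ (U₃ ξ) ξ)
    (hα : α ≠ 0) (ht : 0 < t) (hξ : a * x - ν / α * t ^ α ∈ s) :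
    t ^ (1 - α) * deriv (fun τ => U (a * x - ν / α * τ ^ α)) t
      + p * U (a * x - ν / α * t ^ α) * deriv (fun y => U (a * y - ν / α * t ^ α)) x
      + q * t ^ (1 - α) * deriv (fun τ => deriv (deriv fun y => U (a * y - ν / α * τ ^ α)) x) t
      = -ν * U₁ (a * x - ν / α * t ^ α)
        + p * a * U (a * x - ν / α * t ^ α) * U₁ (a * x - ν / α * t ^ α)
        - q * ν * a ^ 2 * U₃ (a * x - ν / α * t ^ α) := by
  have hnhds : ∀ᶠ τ in 𝓝 t, a * x - ν / α * τ ^ α ∈ s :=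
    (continuousAt_const.sub (continuousAt_const.mul
      (continuousAt_rpow_const t α (Or.inl ht.ne')))).preimage_mem_nhds (hs.mem_nhds hξ)
  have huxx : (fun τ => deriv (deriv fun y => U (a * y - ν / α * τ ^ α)) x)
      =ᶠ[𝓝 t] fun τ => U₂ (a * x - ν / α * τ ^ α) * a ^ 2 :=
    hnhds.mono fun τ hτ => deriv_deriv_comp_affine hs hU hU₁ hτ
  have hut := rpow_one_sub_mul_deriv_wave_time hα ht (hU _ hξ)
  have huxxt := rpow_one_sub_mul_deriv_wave_time (U := fun ξ => U₂ ξ * a ^ 2) hα ht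
    ((hU₂ _ hξ).mul_const (a ^ 2))
  rw [mul_assoc q, hut, huxx.deriv_eq, huxxt, (hasDerivAt_comp_affine (hU _ hξ)).deriv]
  ring

end TravelingWave

section CschSq

noncomputable def cschSqDeriv (A ξ : ℝ) : ℝ := -2 * A * cosh ξ / sinh ξ ^ 3

noncomputable def cschSqDeriv2 (A ξ : ℝ) : ℝ := A * (4 * sinh ξ ^ 2 + 6) / sinh ξ ^ 4

noncomputable def cschSqDeriv3 (A ξ : ℝ) : ℝ := cschSqDeriv A ξ * (4 + 12 / sinh ξ ^ 2)

variable (A : ℝ) {ξ : ℝ}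

theorem hasDerivAt_cschSq (hξ : ξ ≠ 0) :
    HasDerivAt (fun ξ => A * (1 / sinh ξ) ^ 2) (cschSqDeriv A ξ) ξ := by
  have hs : sinh ξ ≠ 0 := sinh_ne_zero.mpr hξ
  have h := (hasDerivAt_const ξ A).div ((hasDerivAt_sinh ξ).pow 2) (pow_ne_zero 2 hs)
  simp only [one_div, inv_pow, ← div_eq_mul_inv]
  refine h.congr_deriv ?_
  unfold cschSqDeriv; simp only [Pi.pow_apply]; field_simp; ring

theorem hasDerivAt_cschSqDeriv (hξ : ξ ≠ 0) :
    HasDerivAt (cschSqDeriv A) (cschSqDeriv2 A ξ) ξ := by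
  have hs : sinh ξ ≠ 0 := sinh_ne_zero.mpr hξ
  have h := ((hasDerivAt_cosh ξ).const_mul (-2 * A)).div ((hasDerivAt_sinh ξ).pow 3)
    (pow_ne_zero 3 hs)
  refine h.congr_deriv ?_
  unfold cschSqDeriv2; simp only [Pi.pow_apply]; field_simp; linear_combination 6 * A * sinh ξ ^ 2 * cosh_sq ξ

theorem hasDerivAt_cschSqDeriv2 (hξ : ξ ≠ 0) :
    HasDerivAt (cschSqDeriv2 A) (cschSqDeriv3 A ξ) ξ := by
  have hs : sinh ξ ≠ 0 := sinh_ne_zero.mpr hξ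
  have h := ((((hasDerivAt_sinh ξ).pow 2).const_mul 4).add_const 6 |>.const_mul A).div
    ((hasDerivAt_sinh ξ).pow 4) (pow_ne_zero 4 hs)
  refine h.congr_deriv ?_
  unfold cschSqDeriv3 cschSqDeriv; simp only [Pi.pow_apply]; field_simp; ring

end CschSq

theorem mul_sqrt_sq_of_sq_eq_one {ε x : ℝ} (hε : ε = 1 ∨ ε = -1) (hx : 0 ≤ x) :
    (ε * √x) ^ 2 = x := by
  rcases hε with rfl | rfl <;> simp [sq_sqrt hx]

theorem ew_csch_pde_solution_general
    (α p q ν ε : ℝ) (hα : α ∈ Set.Ioc (0 : ℝ) 1)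
    (hp : p ≠ 0) (hq : q < 0) (hε : ε = 1 ∨ ε = -1)
    (a A : ℝ)
    (ha : a = ε * Real.sqrt (-1 / (4 * q)))
    (hA : A = 12 * ν * q * a / p) :
    ∀ x t : ℝ, 0 < t → a * x - ν / α * t ^ α ≠ 0 →
      t ^ (1 - α) *
        deriv (fun τ : ℝ => A * (1 / Real.sinh (a * x - ν / α * τ ^ α)) ^ 2) t
      + p * (A * (1 / Real.sinh (a * x - ν / α * t ^ α)) ^ 2)
          * deriv (fun y : ℝ => A * (1 / Real.sinh (a * y - ν / α * t ^ α)) ^ 2) x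
      + q * t ^ (1 - α) *
          deriv (fun τ : ℝ =>
            deriv (deriv
              (fun y : ℝ => A * (1 / Real.sinh (a * y - ν / α * τ ^ α)) ^ 2)) x) t = 0 := by
  intro x t ht hξ
  have haq : 4 * q * a ^ 2 = -1 := by
    rw [ha, mul_sqrt_sq_of_sq_eq_one hε (div_nonneg_of_nonpos (by norm_num) (by linarith))]
    field_simp [hq.ne]
  have hAp : p * A = 12 * ν * q * a := by rw [hA]; field_simp
  rw [ew_operator_wave_eq (U := fun ξ => A * (1 / sinh ξ) ^ 2) p q isOpen_compl_singleton
    (fun _ h => hasDerivAt_cschSq A h) (fun _ h => hasDerivAt_cschSqDeriv A h)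
    (fun _ h => hasDerivAt_cschSqDeriv2 A h) hα.1.ne' ht hξ]
  unfold cschSqDeriv3
  set z := a * x - ν / α * t ^ α
  linear_combination (-ν * cschSqDeriv A z) * haq
    + (cschSqDeriv A z * a / sinh z ^ 2) * hAp

/-- The csch²-type traveling wave solutions of the conformable time fractional EW
equation `t^(1-α) u_t + p u u_x + q t^(1-α) ∂_t (u_xx) = 0`, valid where the wave
variable is nonzero. -/
theorem ew_csch_pde_solution
    (α p q ν ε : ℝ) (hα : α ∈ Set.Ioc (0 : ℝ) 1)
    (hp : p ≠ 0) (hν : ν ≠ 0) (hq : q < 0) (hε : ε = 1 ∨ ε = -1)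
    (a A : ℝ)
    (ha : a = ε * Real.sqrt (-1 / (4 * q)))
    (hA : A = 12 * ν * q * a / p) :
    ∀ x t : ℝ, 0 < t → a * x - ν / α * t ^ α ≠ 0 →
      t ^ (1 - α) *
        deriv (fun τ : ℝ => A * (1 / Real.sinh (a * x - ν / α * τ ^ α)) ^ 2) t
      + p * (A * (1 / Real.sinh (a * x - ν / α * t ^ α)) ^ 2)
          * deriv (fun y : ℝ => A * (1 / Real.sinh (a * y - ν / α * t ^ α)) ^ 2) x
      + q * t ^ (1 - α) *
          deriv (fun τ : ℝ =>
            deriv (deriv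
              (fun y : ℝ => A * (1 / Real.sinh (a * y - ν / α * τ ^ α)) ^ 2)) x) t = 0 :=
  ew_csch_pde_solution_general α p q ν ε hα hp hq hε a A ha hA
end
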